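/- arXiv:2111.02227 — 3 statements merged into one kernel-verified Lean document; each statement's English description precedes it below -/
import Mathlib

section
/- Let g ∈ L²(ℝ) be an arbitrary window function, let θ ∈ ℝ, h > 0, z ∈ ℝ², and let P = z + R_θ(ℝ × hℤ) = {z + R_θ·(x, hk)ᵀ : x ∈ ℝ, k ∈ ℤ} be a set of shifted parallel lines in the time-frequency plane. Then there exist f₁, f₂ ∈ L²(ℝ) such that |V_g f₁(p)| = |V_g f₂(p)| for every p ∈ P, yet f₁ and f₂ do not agree up to a global phase. In other words, (g, P) is never a uniqueness pair of the STFT phase retrieval problem. -/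
open MeasureTheory Complex Real

/-- The short-time Fourier transform of `f ∈ L²(ℝ)` with respect to the window `g ∈ L²(ℝ)`:
`V_g f (x, ω) = ∫ f(t) conj(g(t-x)) e^{-2πiωt} dt`. -/
noncomputable def STFT (g f : Lp ℂ 2 (volume : Measure ℝ)) (x ω : ℝ) : ℂ :=
  ∫ t : ℝ, f t * (starRingEnd ℂ) (g (t - x)) * Complex.exp (-2 * Real.pi * Complex.I * ω * t)

/-- `f` and `h` agree up to a global phase: `f = ν • h` for some unimodular `ν ∈ ℂ`. -/
def SamePhase (f h : Lp ℂ 2 (volume : Measure ℝ)) : Prop :=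
  ∃ ν : ℂ, ‖ν‖ = 1 ∧ f = ν • h

/-! With `u t = g (-t)`, a change of variables gives the symmetry
`conj (V_g u (x, ω)) = e^{2πiωx} V_g u (x, ω)`. Let `v = μ e^{2πibt} u (t - a)` with `(a, b)` normal
to the lines, `|(a, b)| = 1/h`, and a suitable unimodular `μ`; by covariance of the STFT,
`conj (V_g v) = -e^{2πiωx} V_g v` exactly on the lines. So `V_g u` and `V_g v` are orthogonal there
and `|V_g (u + v)| = |V_g (u - v)|` on `P`. If `u + v ∼ u - v`, then `u` is an eigenfunction of the
time-frequency shift by `(a, b) ≠ 0`, which forces `u = 0`: for `a ≠ 0`, `|u|²` is integrable and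
a.e. `a`-periodic; for `a = 0`, `u` lives on the countable set where `c e^{2πibt} = 1`. -/

open ComplexConjugate
open scoped ENNReal

local notation "L²" => Lp ℂ 2 (volume : Measure ℝ)

namespace MeasureTheory.Lp

noncomputable def reflect (f : L²) : L² :=
  compMeasurePreserving Neg.neg (Measure.measurePreserving_neg volume) f

noncomputable def translate (a : ℝ) (f : L²) : L² :=
  compMeasurePreserving (· - a) (measurePreserving_sub_right volume a) f

lemma memLp_modulate (b : ℝ) (f : L²) :
    MemLp (fun t : ℝ => cexp (2 * π * I * b * t) * f t) 2 volume :=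
  (Lp.memLp f).of_le (by fun_prop) <| .of_forall fun t => by simp [Complex.norm_exp]

noncomputable def modulate (b : ℝ) (f : L²) : L² := (memLp_modulate b f).toLp

lemma coeFn_reflect (f : L²) : reflect f =ᵐ[volume] fun t => f (-t) :=
  coeFn_compMeasurePreserving _ _

lemma coeFn_translate (a : ℝ) (f : L²) : translate a f =ᵐ[volume] fun t => f (t - a) :=
  coeFn_compMeasurePreserving _ _

lemma coeFn_modulate (b : ℝ) (f : L²) :
    modulate b f =ᵐ[volume] fun t => cexp (2 * π * I * b * t) * f t :=
  MemLp.coeFn_toLp _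

@[simp] lemma norm_reflect (f : L²) : ‖reflect f‖ = ‖f‖ := norm_compMeasurePreserving _ _

@[simp] lemma norm_translate (a : ℝ) (f : L²) : ‖translate a f‖ = ‖f‖ :=
  norm_compMeasurePreserving _ _

@[simp] lemma norm_modulate (b : ℝ) (f : L²) : ‖modulate b f‖ = ‖f‖ := by
  rw [modulate, norm_toLp, Lp.norm_def]
  congr 1
  exact eLpNorm_congr_norm_ae <| .of_forall fun t => by simp [Complex.norm_exp]

end MeasureTheory.Lp

section STFT

variable (g : L²)

lemma integrable_STFT_integrand (f : L²) (x ω : ℝ) :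
    Integrable (fun t : ℝ => f t * conj (g (t - x)) * cexp (-2 * π * I * ω * t)) volume := by
  have hg : MemLp (fun t : ℝ => conj (g (t - x))) 2 volume :=
    ((Lp.memLp g).comp_measurePreserving (measurePreserving_sub_right volume x)).star
  refine ((Lp.memLp f).integrable_mul hg).mul_bdd (c := 1) (by fun_prop) ?_
  exact .of_forall fun t => by simp [Complex.norm_exp]

lemma STFT_eq_of_ae_eq {f : L²} {w : ℝ → ℂ} (hfw : f =ᵐ[volume] w) (x ω : ℝ) :
    STFT g f x ω = ∫ t : ℝ, w t * conj (g (t - x)) * cexp (-2 * π * I * ω * t) :=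
  integral_congr_ae <| by filter_upwards [hfw] with t ht; rw [ht]

lemma STFT_add (f₁ f₂ : L²) (x ω : ℝ) :
    STFT g (f₁ + f₂) x ω = STFT g f₁ x ω + STFT g f₂ x ω := by
  rw [STFT_eq_of_ae_eq g (Lp.coeFn_add f₁ f₂), STFT, STFT,
    ← integral_add (integrable_STFT_integrand g f₁ x ω) (integrable_STFT_integrand g f₂ x ω)]
  congr 1 with t
  simp only [Pi.add_apply]
  ring

lemma STFT_sub (f₁ f₂ : L²) (x ω : ℝ) :
    STFT g (f₁ - f₂) x ω = STFT g f₁ x ω - STFT g f₂ x ω := by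
  rw [STFT_eq_of_ae_eq g (Lp.coeFn_sub f₁ f₂), STFT, STFT,
    ← integral_sub (integrable_STFT_integrand g f₁ x ω) (integrable_STFT_integrand g f₂ x ω)]
  congr 1 with t
  simp only [Pi.sub_apply]
  ring

lemma STFT_smul (c : ℂ) (f : L²) (x ω : ℝ) : STFT g (c • f) x ω = c * STFT g f x ω := by
  rw [STFT_eq_of_ae_eq g (Lp.coeFn_smul c f), STFT, ← integral_const_mul]
  congr 1 with t
  simp only [Pi.smul_apply, smul_eq_mul]
  ring

lemma STFT_translate (a : ℝ) (f : L²) (x ω : ℝ) :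
    STFT g (Lp.translate a f) x ω = cexp (-2 * π * I * ω * a) * STFT g f (x - a) ω := by
  rw [STFT_eq_of_ae_eq g (Lp.coeFn_translate a f), STFT, ← integral_const_mul,
    ← integral_add_right_eq_self _ a]
  congr 1 with t
  have hexp : cexp (-2 * π * I * ω * ↑(t + a)) =
      cexp (-2 * π * I * ω * a) * cexp (-2 * π * I * ω * t) := by
    rw [← Complex.exp_add]; push_cast; ring_nf
  rw [add_sub_cancel_right, show t + a - x = t - (x - a) by ring, hexp]
  ring

lemma STFT_modulate (b : ℝ) (f : L²) (x ω : ℝ) :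
    STFT g (Lp.modulate b f) x ω = STFT g f x (ω - b) := by
  rw [STFT_eq_of_ae_eq g (Lp.coeFn_modulate b f), STFT]
  congr 1 with t
  have hexp : cexp (2 * π * I * b * t) * cexp (-2 * π * I * ω * t) =
      cexp (-2 * π * I * ↑(ω - b) * t) := by
    rw [← Complex.exp_add]; push_cast; ring_nf
  linear_combination f t * conj (g (t - x)) * hexp

lemma conj_STFT_reflect_self (x ω : ℝ) :
    conj (STFT g (Lp.reflect g) x ω) = cexp (2 * π * I * ω * x) * STFT g (Lp.reflect g) x ω := by
  rw [STFT_eq_of_ae_eq g (Lp.coeFn_reflect g), ← integral_conj, ← integral_const_mul,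
    ← integral_sub_left_eq_self _ volume x]
  congr 1 with t
  have hexp : conj (cexp (-2 * π * I * ω * ↑(x - t))) =
      cexp (2 * π * I * ω * x) * cexp (-2 * π * I * ω * t) := by
    rw [← Complex.exp_conj, ← Complex.exp_add]
    simp only [map_mul, map_neg, map_ofNat, Complex.conj_ofReal, Complex.conj_I]
    push_cast; ring_nf
  rw [map_mul, map_mul, Complex.conj_conj, hexp, neg_sub, sub_sub_cancel_left]
  ring

lemma STFT_modulate_translate (f : L²) (a b x ω : ℝ) :
    STFT g (Lp.modulate b (Lp.translate a f)) x ω =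
      cexp (-2 * π * I * (ω - b) * a) * STFT g f (x - a) (ω - b) := by
  rw [STFT_modulate, STFT_translate]
  push_cast
  rfl

/- `μ = i e^{iπs}` satisfies `μ² = -e^{2πis}`, which turns the antisymmetry into the condition
`aω - bx - ab ∈ s + ℤ`. -/
lemma conj_STFT_modulate_translate_reflect_self {a b s x ω : ℝ} {k : ℤ}
    (hk : a * ω - b * x - a * b = s + k) :
    conj (STFT g ((I * cexp (π * I * s)) • Lp.modulate b (Lp.translate a (Lp.reflect g))) x ω) =
      -(cexp (2 * π * I * ω * x) *
        STFT g ((I * cexp (π * I * s)) • Lp.modulate b (Lp.translate a (Lp.reflect g))) x ω) := by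
  have hexp : cexp (π * -I * s) * cexp (-2 * π * -I * (ω - b) * a) *
      cexp (2 * π * I * ↑(ω - b) * ↑(x - a)) =
      cexp (2 * π * I * ω * x) * cexp (π * I * s) * cexp (-2 * π * I * (ω - b) * a) := by
    simp only [← Complex.exp_add]
    refine Complex.exp_eq_exp_iff_exists_int.mpr ⟨k, ?_⟩
    have hk' : (a : ℂ) * ω - b * x - a * b = s + k := by exact_mod_cast hk
    push_cast
    linear_combination (2 * π * I) * hk'
  rw [STFT_smul, STFT_modulate_translate]
  simp only [map_mul, ← Complex.exp_conj, map_neg, map_sub, map_ofNat, Complex.conj_ofReal,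
    Complex.conj_I]
  rw [conj_STFT_reflect_self]
  linear_combination (-I) * STFT g (Lp.reflect g) (x - a) (ω - b) * hexp

end STFT

lemma ae_periodic_zsmul {α : Type*} {ψ : ℝ → α} {T : ℝ}
    (hper : (fun t => ψ (t + T)) =ᵐ[volume] ψ) (n : ℤ) :
    (fun t => ψ (t + n • T)) =ᵐ[volume] ψ := by
  have shift (c : ℝ) {φ₁ φ₂ : ℝ → α} (h : φ₁ =ᵐ[volume] φ₂) :
      (fun t => φ₁ (t + c)) =ᵐ[volume] fun t => φ₂ (t + c) :=
    (measurePreserving_add_right volume c).quasiMeasurePreserving.ae_eq_comp h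
  induction n using Int.induction_on with
  | zero => simp
  | succ n ih =>
    refine .trans (.of_eq ?_) ((shift T ih).trans hper)
    ext t
    rw [add_smul, one_smul, add_assoc, add_comm T]
  | pred n ih =>
    have hper' : (fun t => ψ (t + -T)) =ᵐ[volume] ψ := by
      simpa using (shift (-T) hper).symm
    refine .trans (.of_eq ?_) ((shift (-T) ih).trans hper')
    ext t
    rw [sub_smul, one_smul, sub_eq_add_neg, add_comm _ (-T), add_assoc]

lemma lintegral_eq_zero_of_ae_periodic {ψ : ℝ → ℝ≥0∞} {T : ℝ} (hT : T ≠ 0)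
    (hper : (fun t => ψ (t + T)) =ᵐ[volume] ψ) (hfin : ∫⁻ t, ψ t ≠ ∞) : ∫⁻ t, ψ t = 0 := by
  have hT' : 0 < |T| := abs_pos.mpr hT
  have hper' (n : ℤ) : (fun t => ψ (n • |T| + t)) =ᵐ[volume] ψ := by
    rcases abs_choice T with h | h <;> rw [h]
    · simpa only [add_comm] using ae_periodic_zsmul hper n
    · simpa only [add_comm, smul_neg, neg_smul] using ae_periodic_zsmul hper (-n)
  have : Infinite (AddSubgroup.zmultiples |T|) :=
    .of_injective (fun n : ℤ => ⟨n • |T|, n, rfl⟩)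
      fun m n h => (zsmul_left_strictMono hT').injective (congrArg Subtype.val h)
  have hsum := (isAddFundamentalDomain_Ioc hT' 0).lintegral_eq_tsum'' ψ
  have hconst : ∀ g : AddSubgroup.zmultiples |T|,
      ∫⁻ t in Set.Ioc 0 (0 + |T|), ψ (g +ᵥ t) = ∫⁻ t in Set.Ioc 0 (0 + |T|), ψ t := by
    rintro ⟨_, n, rfl⟩
    exact lintegral_congr_ae (ae_restrict_of_ae (hper' n))
  simp only [hconst] at hsum
  by_contra h0
  rw [hsum, ENNReal.tsum_const_eq_top_of_ne_zero (by simpa [hsum] using h0)] at hfin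
  exact hfin rfl

lemma ae_eq_zero_of_enorm_ae_eq_mul_enorm_sub {E : Type*} [NormedAddCommGroup E] {p : ℝ≥0∞}
    (hp₀ : p ≠ 0) (hp : p ≠ ∞) {f : ℝ → E} (hf : MemLp f p volume) {a : ℝ} (ha : a ≠ 0)
    {r : ℝ≥0∞} (hr : r ≠ ∞) (h : ∀ᵐ t, ‖f t‖ₑ = r * ‖f (t - a)‖ₑ) : f =ᵐ[volume] 0 := by
  have hq : 0 < p.toReal := ENNReal.toReal_pos hp₀ hp
  set ψ : ℝ → ℝ≥0∞ := fun t => ‖f t‖ₑ ^ p.toReal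
  have hψ : ψ =ᵐ[volume] fun t => r ^ p.toReal * ψ (t - a) := by
    filter_upwards [h] with t ht
    simp only [ψ, ht, ENNReal.mul_rpow_of_nonneg _ _ hq.le]
  have hfin : ∫⁻ t, ψ t ≠ ∞ := (lintegral_rpow_enorm_lt_top_of_eLpNorm_lt_top hp₀ hp hf.2).ne
  suffices h0 : ∫⁻ t, ψ t = 0 by
    filter_upwards [(lintegral_eq_zero_iff' (hf.1.enorm.pow_const _)).mp h0] with t ht
    simpa [ψ, ENNReal.rpow_eq_zero_iff_of_pos hq] using ht
  by_contra h0
  have hscale : ∫⁻ t, ψ t = r ^ p.toReal * ∫⁻ t, ψ t := by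
    nth_rw 1 [lintegral_congr_ae hψ]
    rw [lintegral_const_mul' _ _ (ENNReal.rpow_ne_top_of_nonneg hq.le hr),
      lintegral_sub_right_eq_self ψ a]
  have hr1 : r ^ p.toReal = 1 :=
    (ENNReal.mul_left_inj h0 hfin).mp (by rw [one_mul, ← hscale])
  refine h0 (lintegral_eq_zero_of_ae_periodic (neg_ne_zero.mpr ha) ?_ hfin)
  simpa [hr1, sub_eq_add_neg] using hψ.symm

lemma countable_setOf_mul_exp_eq_one (d : ℂ) {b : ℝ} (hb : b ≠ 0) :
    {t : ℝ | d * cexp (2 * π * I * b * t) = 1}.Countable := by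
  rcases Set.eq_empty_or_nonempty {t : ℝ | d * cexp (2 * π * I * b * t) = 1} with hS | ⟨t₀, ht₀⟩
  · simp [hS]
  refine (Set.countable_range fun n : ℤ => t₀ + n / b).mono fun t ht => ?_
  have hexp : cexp (2 * π * I * b * t) = cexp (2 * π * I * b * t₀) :=
    mul_left_cancel₀ (left_ne_zero_of_mul_eq_one ht₀) (ht.trans ht₀.symm)
  obtain ⟨n, hn⟩ := Complex.exp_eq_exp_iff_exists_int.mp hexp
  have hbt : ((b * t : ℝ) : ℂ) = ((b * t₀ + n : ℝ) : ℂ) := by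
    refine mul_left_cancel₀ Complex.two_pi_I_ne_zero ?_
    push_cast
    linear_combination hn
  refine ⟨n, ?_⟩
  field_simp
  linarith [Complex.ofReal_injective hbt]

lemma ae_eq_zero_of_ae_eq_mul_exp_mul {f : ℝ → ℂ} {d : ℂ} {b : ℝ} (hb : b ≠ 0)
    (h : ∀ᵐ t, f t = d * cexp (2 * π * I * b * t) * f t) : f =ᵐ[volume] 0 := by
  filter_upwards [h, (countable_setOf_mul_exp_eq_one d hb).ae_notMem volume] with t ht hS
  have : (1 - d * cexp (2 * π * I * b * t)) * f t = 0 := by linear_combination ht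
  exact (mul_eq_zero.mp this).resolve_left (sub_ne_zero.mpr (Ne.symm hS))

lemma MeasureTheory.Lp.eq_zero_of_eq_smul_modulate_translate {f : L²} {a b : ℝ}
    (hab : a ≠ 0 ∨ b ≠ 0) {c : ℂ} (h : f = c • Lp.modulate b (Lp.translate a f)) : f = 0 := by
  have hrel : ∀ᵐ t, f t = c * cexp (2 * π * I * b * t) * f (t - a) := by
    filter_upwards [Lp.coeFn_smul c (Lp.modulate b (Lp.translate a f)),
      Lp.coeFn_modulate b (Lp.translate a f), Lp.coeFn_translate a f] with t hc hm ht
    conv_lhs => rw [h]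
    rw [hc, Pi.smul_apply, hm, ht, smul_eq_mul, ← mul_assoc]
  rw [Lp.eq_zero_iff_ae_eq_zero]
  rcases eq_or_ne a 0 with rfl | ha
  · simp only [sub_zero] at hrel
    exact ae_eq_zero_of_ae_eq_mul_exp_mul (hab.resolve_left (not_not.mpr rfl)) hrel
  · refine ae_eq_zero_of_enorm_ae_eq_mul_enorm_sub two_ne_zero ENNReal.ofNat_ne_top (Lp.memLp f)
      ha (r := ‖c‖ₑ) enorm_ne_top ?_
    filter_upwards [hrel] with t ht
    rw [ht, enorm_mul, enorm_mul, show 2 * π * I * b * t = ((2 * π * b * t : ℝ) : ℂ) * I by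
      push_cast; ring, Complex.enorm_exp_ofReal_mul_I, mul_one]

lemma add_ne_smul_sub {M : Type*} [AddCommGroup M] [Module ℂ M] {u v : M} (hv : v ≠ 0)
    (huv : ∀ c : ℂ, u ≠ c • v) (ν : ℂ) : u + v ≠ ν • (u - v) := by
  intro h
  have key : (ν - 1) • u = (ν + 1) • v := by linear_combination (norm := module) (-1 : ℂ) • h
  rcases eq_or_ne ν 1 with rfl | hν
  · norm_num at key
    exact hv (smul_eq_zero.mp key.symm |>.resolve_left two_ne_zero)
  · refine huv ((ν + 1) / (ν - 1)) ?_
    rw [div_eq_inv_mul, mul_smul, ← key, inv_smul_smul₀ (sub_ne_zero.mpr hν)]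

lemma norm_add_eq_norm_sub_of_conj_eq {A B w : ℂ} (hw : ‖w‖ = 1) (hA : conj A = w * A)
    (hB : conj B = -(w * B)) : ‖A + B‖ = ‖A - B‖ :=
  calc ‖A + B‖ = ‖conj (A + B)‖ := (Complex.norm_conj _).symm
    _ = ‖w * (A - B)‖ := by rw [map_add, hA, hB]; ring_nf
    _ = ‖A - B‖ := by rw [norm_mul, hw, one_mul]

lemma exists_L2_ne_zero : ∃ f : L², f ≠ 0 := by
  refine ⟨indicatorConstLp 2 (measurableSet_Ioc (a := (0 : ℝ)) (b := 1)) (by simp) (1 : ℂ),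
    fun h => ?_⟩
  have := norm_indicatorConstLp (μ := volume) (s := Set.Ioc (0 : ℝ) 1) (c := (1 : ℂ))
    (hs := measurableSet_Ioc) (hμs := by simp) two_ne_zero ENNReal.ofNat_ne_top
  simp [h] at this

/-- **No window and no set of shifted parallel lines form a uniqueness pair.**
For every window `g ∈ L²(ℝ)`, every angle `θ`, every `h > 0` and every shift `z ∈ ℝ²`,
there are `f₁, f₂ ∈ L²(ℝ)` whose spectrograms agree on the shifted parallel lines
`z + R_θ(ℝ × hℤ)` but which do not agree up to a global phase. -/
theorem stmt2 (g : Lp ℂ 2 (volume : Measure ℝ)) (θ : ℝ) (h : ℝ) (hh : 0 < h) (z : ℝ × ℝ) :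
    ∃ f₁ f₂ : Lp ℂ 2 (volume : Measure ℝ),
      (∀ x : ℝ, ∀ k : ℤ,
        ‖STFT g f₁ (z.1 + (x * Real.cos θ - (h * k) * Real.sin θ))
            (z.2 + (x * Real.sin θ + (h * k) * Real.cos θ))‖ =
        ‖STFT g f₂ (z.1 + (x * Real.cos θ - (h * k) * Real.sin θ))
            (z.2 + (x * Real.sin θ + (h * k) * Real.cos θ))‖) ∧
      ¬ SamePhase f₁ f₂ := by
  rcases eq_or_ne g 0 with rfl | hg
  · obtain ⟨f, hf⟩ := exists_L2_ne_zero
    refine ⟨f, 0, fun x k => by simp [STFT], fun ⟨ν, _, hfν⟩ => hf ?_⟩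
    rwa [smul_zero] at hfν
  set a := Real.cos θ / h
  set b := Real.sin θ / h
  set s := a * z.2 - b * z.1 - a * b
  set u := Lp.reflect g
  set v := (I * cexp (π * I * s)) • Lp.modulate b (Lp.translate a u)
  have hab : a ≠ 0 ∨ b ≠ 0 := by
    by_contra! hab
    have := Real.sin_sq_add_cos_sq θ
    simp_all [a, b, hh.ne']
  have hu : u ≠ 0 := by rwa [← norm_ne_zero_iff, Lp.norm_reflect, norm_ne_zero_iff]
  have hv : v ≠ 0 := by
    refine smul_ne_zero (by simp [Complex.exp_ne_zero]) ?_
    rwa [← norm_ne_zero_iff, Lp.norm_modulate, Lp.norm_translate, norm_ne_zero_iff]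
  have huv (c : ℂ) : u ≠ c • v := fun huv =>
    hu (Lp.eq_zero_of_eq_smul_modulate_translate hab (by rwa [smul_smul] at huv))
  refine ⟨u + v, u - v, fun x k => ?_, fun ⟨ν, _, hν⟩ => add_ne_smul_sub hv huv ν hν⟩
  rw [STFT_add, STFT_sub]
  refine norm_add_eq_norm_sub_of_conj_eq ?_ (conj_STFT_reflect_self g _ _)
    (conj_STFT_modulate_translate_reflect_self g (k := k) ?_)
  · simp [Complex.norm_exp]
  simp only [a, b, s]
  field_simp
  linear_combination (h ^ 2 * k) * Real.sin_sq_add_cos_sq θ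
end

section
/- Let u ∈ L²(ℝ) with u ≠ 0, let s > 0, and let c : ℤ → ℂ be a finitely supported sequence belonging to ℓ²_O(ℤ). Then the functions f = Σ_{k∈ℤ} c_k M_{sk} u and f_× = Σ_{k∈ℤ} conj(c_k) M_{sk} u do not agree up to a global phase: there is no ν ∈ ℂ with |ν| = 1 and f = ν·f_×. (This is the case θ = π/2 of the non-equivalence theorem, since the fractional Fourier shift of order π/2 is the modulation operator.) -/
open MeasureTheory Complex Real

/-- Modulation operator `M_ν` on `L²(ℝ)`: `(M_ν f)(t) = e^{2πiνt} f(t)`. -/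
noncomputable def Modulate (ν : ℝ) (f : Lp ℂ 2 (volume : Measure ℝ)) :
    Lp ℂ 2 (volume : Measure ℝ) :=
  MemLp.toLp (fun t : ℝ => Complex.exp (2 * Real.pi * Complex.I * ν * t) * f t) <| by
    refine MemLp.of_le (Lp.memLp f) ?_ ?_
    · exact (Complex.continuous_exp.comp (by continuity)).aestronglyMeasurable.mul
        (Lp.aestronglyMeasurable f)
    · refine Filter.Eventually.of_forall fun t => ?_
      rw [norm_mul]
      have h1 : ‖Complex.exp (2 * Real.pi * Complex.I * (ν : ℂ) * (t : ℂ))‖ = 1 := by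
        rw [Complex.norm_exp]
        norm_num [Complex.exp_re]
      rw [h1, one_mul]

/-- The values of the sequence `c : ℤ → ℂ` do not all lie on a single line through the
origin of the complex plane (the defining property of `ℓ²_𝒪(ℤ)`). -/
def NotOnLine (c : ℤ → ℂ) : Prop :=
  ¬ ∃ α : ℝ, ∀ k : ℤ, ∃ r : ℝ, c k = Complex.exp (α * Complex.I) * r

/-!
If `f = ν f_×`, then `∑ₖ (cₖ - ν conj cₖ) M_{sk} u = 0`. The modulations `M_{sk} u` of a nonzero
`u` are linearly independent: pointwise the sum is `p(t) u(t)` with `p` a trigonometric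
polynomial, which is a Laurent polynomial in `e^{2πist}` and so vanishes only on a countable set
unless all its coefficients do. Hence `cₖ = ν conj cₖ` for all `k`, and writing `ν = e²` with
`|e| = 1`, every `conj e · cₖ` is real: the `cₖ` lie on the line `e ℝ`.
-/

open ComplexConjugate

theorem Complex.exists_eq_exp_mul_ofReal_of_eq_mul_conj {ν z : ℂ} (hν : ‖ν‖ = 1)
    (hz : z = ν * conj z) : ∃ r : ℝ, z = exp (↑(ν.arg / 2) * I) * r := by
  set e := exp (↑(ν.arg / 2) * I)
  have he_sq : e * e = ν := by
    rw [← exp_add, ← add_mul, ← ofReal_add, add_halves]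
    simpa [hν] using norm_mul_exp_arg_mul_I ν
  have he_unit : conj e * e = 1 := by
    rw [conj_mul', norm_exp_ofReal_mul_I, ofReal_one, one_pow]
  obtain ⟨r, hr⟩ := conj_eq_iff_real.1 (show conj (conj e * z) = conj e * z by
    conv_rhs => rw [hz, ← he_sq]
    rw [map_mul, conj_conj]
    linear_combination -(e * conj z) * he_unit)
  refine ⟨r, ?_⟩
  rw [← hr]
  linear_combination -z * he_unit

open Polynomial in
theorem finite_setOf_sum_zpow_eq_zero {K : Type*} [Field K] {S : Finset ℤ} {a : ℤ → K}
    {k₀ : ℤ} (hk₀ : k₀ ∈ S) (ha : a k₀ ≠ 0) :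
    {z : K | z ≠ 0 ∧ ∑ k ∈ S, a k * z ^ k = 0}.Finite := by
  set m := S.min' ⟨k₀, hk₀⟩
  have hm : ∀ k ∈ S, m ≤ k := fun k hk => S.min'_le k hk
  -- `z ^ (-m) * ∑ₖ a k * z ^ k` with `m = min S` is a polynomial in `z`.
  set q : K[X] := ∑ k ∈ S, C (a k) * X ^ (k - m).toNat
  have hq : q ≠ 0 := by
    refine ne_of_apply_ne (coeff · (k₀ - m).toNat) ?_
    simp only [q, finsetSum_coeff, coeff_C_mul_X_pow, coeff_zero]
    rwa [Finset.sum_eq_single_of_mem k₀ hk₀ fun k hk hne => if_neg ?_, if_pos rfl]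
    have := hm k hk; have := hm k₀ hk₀; omega
  refine (q.finite_setOfPred_isRoot hq).subset fun z ⟨hz, hsum⟩ => ?_
  have hfactor : ∑ k ∈ S, a k * z ^ k = z ^ m * q.eval z := by
    simp only [q, eval_finsetSum, eval_mul, eval_C, eval_pow, eval_X, Finset.mul_sum]
    refine Finset.sum_congr rfl fun k hk => ?_
    rw [mul_left_comm, ← zpow_natCast, ← zpow_add₀ hz,
      Int.toNat_of_nonneg (sub_nonneg.2 (hm k hk)), add_sub_cancel]
  rw [hfactor] at hsum
  exact (mul_eq_zero.1 hsum).resolve_left (zpow_ne_zero _ hz)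

theorem countable_setOf_sum_exp_eq_zero {s : ℝ} (hs : s ≠ 0) {S : Finset ℤ} {a : ℤ → ℂ}
    {k₀ : ℤ} (hk₀ : k₀ ∈ S) (ha : a k₀ ≠ 0) :
    {t : ℝ | ∑ k ∈ S, a k * exp (2 * π * I * ((s * k : ℝ) : ℂ) * t) = 0}.Countable := by
  have hinj : Function.Injective fun t : ℝ => 2 * π * I * s * (t : ℂ) :=
    (mul_right_injective₀ (by simp [hs, pi_ne_zero])).comp ofReal_injective
  refine (((finite_setOf_sum_zpow_eq_zero hk₀ ha).countable.preimage_cexp).preimage hinj).mono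
    fun t ht => ?_
  simp only [Set.mem_preimage, Set.mem_ofPred_eq] at ht ⊢
  refine ⟨exp_ne_zero _, ?_⟩
  convert ht using 3 with k
  rw [← exp_int_mul]
  push_cast
  ring_nf

theorem coeFn_modulate (ν : ℝ) (f : Lp ℂ 2 (volume : Measure ℝ)) :
    ⇑(Modulate ν f) =ᵐ[volume] fun t => exp (2 * π * I * ν * t) * f t :=
  MemLp.coeFn_toLp _

theorem linearIndependent_modulate {u : Lp ℂ 2 (volume : Measure ℝ)} (hu : u ≠ 0) {s : ℝ}
    (hs : s ≠ 0) : LinearIndependent ℂ fun k : ℤ => Modulate (s * k) u := by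
  rw [linearIndependent_iff']
  intro S a hsum k₀ hk₀
  by_contra ha
  refine hu (Lp.eq_zero_iff_ae_eq_zero.2 ?_)
  have hterms : ∀ᵐ t, ∀ k ∈ S,
      (a k • Modulate (s * k) u) t = a k * exp (2 * π * I * ((s * k : ℝ) : ℂ) * t) * u t := by
    refine (Filter.eventually_all_finset S).2 fun k _ => ?_
    filter_upwards [Lp.coeFn_smul (a k) (Modulate (s * k) u), coeFn_modulate (s * k) u]
      with t hsmul hmod
    rw [hsmul, Pi.smul_apply, hmod, smul_eq_mul, ← mul_assoc]
  have hnull := (countable_setOf_sum_exp_eq_zero hs hk₀ ha).measure_zero volume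
  filter_upwards [Lp.coeFn_fun_finsetSum S fun k => a k • Modulate (s * k) u, hterms,
    measure_eq_zero_iff_ae_notMem.1 hnull, hsum ▸ Lp.coeFn_zero ℂ 2 volume]
    with t hsum_t hterms_t hnonzero hzero
  rw [hzero, Finset.sum_congr rfl hterms_t, ← Finset.sum_mul] at hsum_t
  exact (mul_eq_zero.1 hsum_t.symm).resolve_left hnonzero

/-- If `u ≠ 0`, `s > 0` and `c` is a finitely supported sequence whose values do not all lie on
a line through the origin, then `f = ∑ₖ cₖ M_{sk} u` and `f_× = ∑ₖ conj(cₖ) M_{sk} u` do not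
agree up to a global phase. -/
theorem stmt9 (u : Lp ℂ 2 (volume : Measure ℝ)) (hu : u ≠ 0) (s : ℝ) (hs : 0 < s)
    (c : ℤ →₀ ℂ) (hc : NotOnLine fun k => c k) :
    ¬ SamePhase (∑ k ∈ c.support, c k • Modulate (s * k) u)
      (∑ k ∈ c.support, (starRingEnd ℂ) (c k) • Modulate (s * k) u) := by
  rintro ⟨ν, hν, heq⟩
  have hsum : ∑ k ∈ c.support, (c k - ν * conj (c k)) • Modulate (s * k) u = 0 := by
    simp only [sub_smul, mul_smul, Finset.sum_sub_distrib, ← Finset.smul_sum, ← heq, sub_self]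
  have hfixed : ∀ k, c k = ν * conj (c k) := fun k => by
    by_cases hk : k ∈ c.support
    · exact sub_eq_zero.1 <|
        linearIndependent_iff'.1 (linearIndependent_modulate hu hs.ne') _ _ hsum k hk
    · simp [Finsupp.notMem_support_iff.1 hk]
  exact hc ⟨ν.arg / 2, fun k => exists_eq_exp_mul_ofReal_of_eq_mul_conj hν (hfixed k)⟩
end

section
/- Let L = [[a,b],[c,d]] be an invertible real 2×2 matrix such that a and b are linearly dependent over ℚ and c and d are linearly dependent over ℚ. Then there exist α, β ∈ ℝ∖{0} such that the lattice Lℤ² = {Lv : v ∈ ℤ²} is contained in the rectangular lattice αℤ × βℤ. -/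
lemma row_lemma (a b : ℝ) (hne : ¬ (a = 0 ∧ b = 0))
    (h : ∃ P Q : ℤ, ¬ (P = 0 ∧ Q = 0) ∧ (P : ℝ) * a + (Q : ℝ) * b = 0) :
    ∃ α : ℝ, α ≠ 0 ∧ ∀ m n : ℤ, ∃ j : ℤ, a * m + b * n = α * j := by
  obtain ⟨P, Q, hPQ, h⟩ := h
  by_cases hP : P = 0
  · subst hP
    have hQ : Q ≠ 0 := fun hQ => hPQ ⟨rfl, hQ⟩
    have hQ' : (Q : ℝ) ≠ 0 := Int.cast_ne_zero.mpr hQ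
    have hb : b = 0 := by
      have : (Q : ℝ) * b = 0 := by push_cast at h; linarith
      rcases mul_eq_zero.mp this with h' | h'
      · exact absurd h' hQ'
      · exact h'
    have ha : a ≠ 0 := fun ha => hne ⟨ha, hb⟩
    exact ⟨a, ha, fun m n => ⟨m, by rw [hb]; ring⟩⟩
  · have hP' : (P : ℝ) ≠ 0 := Int.cast_ne_zero.mpr hP
    have hb : b ≠ 0 := by
      intro hb
      apply hne
      refine ⟨?_, hb⟩
      have : (P : ℝ) * a = 0 := by rw [hb] at h; linarith
      rcases mul_eq_zero.mp this with h' | h'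
      · exact absurd h' hP'
      · exact h'
    refine ⟨b / P, div_ne_zero hb hP', fun m n => ⟨P * n - Q * m, ?_⟩⟩
    have ha : a = -(Q : ℝ) * b / P := by field_simp; linarith
    rw [ha]
    push_cast
    field_simp
    ring

/-- If `L = [[a,b],[c,d]]` is invertible, `a, b` are linearly dependent over `ℚ` and `c, d` are
linearly dependent over `ℚ`, then the lattice `Lℤ²` is contained in a rectangular lattice
`αℤ × βℤ` with `α, β ≠ 0`. -/
theorem stmt14 (a b c d : ℝ) (hdet : a * d - b * c ≠ 0)
    (hab : ∃ p q : ℚ, (p, q) ≠ (0, 0) ∧ (p : ℝ) * a + (q : ℝ) * b = 0)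
    (hcd : ∃ p q : ℚ, (p, q) ≠ (0, 0) ∧ (p : ℝ) * c + (q : ℝ) * d = 0) :
    ∃ α β : ℝ, α ≠ 0 ∧ β ≠ 0 ∧
      ∀ m n : ℤ, (∃ j : ℤ, a * m + b * n = α * j) ∧ (∃ j : ℤ, c * m + d * n = β * j) := by
  have key : ∀ x y : ℝ, (∃ p q : ℚ, (p, q) ≠ (0, 0) ∧ (p : ℝ) * x + (q : ℝ) * y = 0) →
      ∃ P Q : ℤ, ¬ (P = 0 ∧ Q = 0) ∧ (P : ℝ) * x + (Q : ℝ) * y = 0 := by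
    intro x y ⟨p, q, hpq, h⟩
    refine ⟨p.num * q.den, q.num * p.den, ?_, ?_⟩
    · rintro ⟨h1, h2⟩
      apply hpq
      have hp : p = 0 := by
        have := mul_eq_zero.mp h1
        rcases this with h' | h'
        · exact Rat.num_eq_zero.mp h'
        · exact absurd h' (by exact_mod_cast q.den_ne_zero)
      have hq : q = 0 := by
        rcases mul_eq_zero.mp h2 with h' | h'
        · exact Rat.num_eq_zero.mp h'
        · exact absurd h' (by exact_mod_cast p.den_ne_zero)
      rw [hp, hq]
    · have hp : (p : ℝ) = (p.num : ℝ) / (p.den : ℝ) := Rat.cast_def _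
      have hq : (q : ℝ) = (q.num : ℝ) / (q.den : ℝ) := Rat.cast_def _
      have hpd : (p.den : ℝ) ≠ 0 := Nat.cast_ne_zero.mpr p.den_ne_zero
      have hqd : (q.den : ℝ) ≠ 0 := Nat.cast_ne_zero.mpr q.den_ne_zero
      have : ((p.num : ℝ) / p.den * x + (q.num : ℝ) / q.den * y) * (p.den * q.den) = 0 := by
        rw [← hp, ← hq, h, zero_mul]
      push_cast
      field_simp at this
      linarith
  have hne1 : ¬ (a = 0 ∧ b = 0) := by rintro ⟨h1, h2⟩; apply hdet; rw [h1, h2]; ring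
  have hne2 : ¬ (c = 0 ∧ d = 0) := by rintro ⟨h1, h2⟩; apply hdet; rw [h1, h2]; ring
  obtain ⟨α, hα, h1⟩ := row_lemma a b hne1 (key a b hab)
  obtain ⟨β, hβ, h2⟩ := row_lemma c d hne2 (key c d hcd)
  exact ⟨α, β, hα, hβ, fun m n => ⟨h1 m n, h2 m n⟩⟩
end
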